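/- arXiv:2311.10342 — 2 statements merged into one kernel-verified Lean document; each statement's English description precedes it below -/
import Mathlib

section
/- Let X be a sober topological space, i.e., X is T0 and quasi-sober. Then the unit of the adjunction between topological spaces and locales is an isomorphism at X: the map sending a point x ∈ X to the frame homomorphism Opens X → Prop, U ↦ (x ∈ U), is a homeomorphism from X onto the space of points of the frame of open sets of X, where the space of points of a frame L is the set of frame homomorphisms L → Prop topologized by the basic open sets { p | p a } for a ∈ L. -/
open CategoryTheory TopologicalSpace

/-!
A point `p` of the frame `Opens X` omits a largest open set, namely the union of all opens it
omits; the complement of that open is an irreducible closed set meeting exactly the opens `U`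
with `p U`. Its generic point, which exists by quasi-sobriety, is therefore sent to `p`, and it is
unique by T0. The unit is an embedding for any T0 space, since the opens of `X` are precisely the
preimages of the basic opens `{p | p U}`.
-/

namespace Locale

variable {X : Type*} [TopologicalSpace X]

def PT.support (p : PT (Opens X)) : Set X :=
  ((sSup {U : Opens X | ¬ p U} : Opens X) : Set X)ᶜ

namespace PT

variable (p : PT (Opens X))

lemma isClosed_support : IsClosed p.support :=
  (sSup {U : Opens X | ¬ p U}).isOpen.isClosed_compl

lemma support_inter_nonempty_iff (V : Opens X) : (p.support ∩ V).Nonempty ↔ p V := by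
  constructor
  · rintro ⟨x, hx, hxV⟩
    by_contra hV
    exact hx (Opens.mem_sSup.2 ⟨V, hV, hxV⟩)
  · intro hV
    by_contra h
    have hle : V ≤ sSup {U : Opens X | ¬ p U} := fun x hxV ↦ by
      by_contra hx
      exact h ⟨x, hx, hxV⟩
    have hp_sSup := OrderHomClass.mono p hle hV
    rw [map_sSup] at hp_sSup
    obtain ⟨_, ⟨U, hU, rfl⟩, hpU⟩ := hp_sSup
    exact hU hpU

lemma isIrreducible_support : IsIrreducible p.support := by
  refine ⟨by simpa using (p.support_inter_nonempty_iff ⊤).2 (by simp), ?_⟩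
  intro u v hu hv hpu hpv
  replace hpu := (p.support_inter_nonempty_iff ⟨u, hu⟩).1 hpu
  replace hpv := (p.support_inter_nonempty_iff ⟨v, hv⟩).1 hpv
  exact (p.support_inter_nonempty_iff (⟨u, hu⟩ ⊓ ⟨v, hv⟩)).2 (by rw [map_inf]; exact ⟨hpu, hpv⟩)

end PT

lemma isInducing_localePointOfSpacePoint : Topology.IsInducing (localePointOfSpacePoint X) := by
  rw [Topology.isInducing_iff]
  ext s
  rw [isOpen_induced_iff]
  constructor
  · intro hs
    exact ⟨_, ⟨⟨s, hs⟩, rfl⟩, rfl⟩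
  · rintro ⟨_, ⟨U, rfl⟩, rfl⟩
    exact U.isOpen

lemma localePointOfSpacePoint_injective [T0Space X] :
    Function.Injective (localePointOfSpacePoint X) := fun _ _ h ↦
  (inseparable_iff_forall_isOpen.2 fun s hs ↦ (DFunLike.congr_fun h ⟨s, hs⟩).to_iff).eq

lemma localePointOfSpacePoint_surjective [QuasiSober X] :
    Function.Surjective (localePointOfSpacePoint X) := fun p ↦
  ⟨p.isIrreducible_support.genericPoint, DFunLike.ext _ _ fun U ↦ propext <|
    ((p.isIrreducible_support.isGenericPoint_genericPoint p.isClosed_support).mem_open_set_iff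
      U.isOpen).trans (p.support_inter_nonempty_iff U)⟩

lemma isHomeomorph_localePointOfSpacePoint [T0Space X] [QuasiSober X] :
    IsHomeomorph (localePointOfSpacePoint X) :=
  isHomeomorph_iff_isEmbedding_surjective.2
    ⟨⟨isInducing_localePointOfSpacePoint, localePointOfSpacePoint_injective⟩,
      localePointOfSpacePoint_surjective⟩

end Locale

/-- For a sober topological space `X` (T0 and quasi-sober), the unit of the adjunction
between topological spaces and locales is an isomorphism at `X`: the map sending a point
`x` to the frame homomorphism `Opens X → Prop`, `U ↦ (x ∈ U)`, is a homeomorphism onto the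
space of points of the frame of opens of `X`. -/
theorem sober_unit_is_iso (X : TopCat) [T0Space X] [QuasiSober X] :
    IsIso (Locale.adjunctionTopToLocalePT.unit.app X) ∧
    ∀ (x : X) (U : Opens X),
      ((show Locale.PT (Opens X) from (Locale.adjunctionTopToLocalePT.unit.app X) x) U
        ↔ x ∈ U) :=
  ⟨(TopCat.isIso_iff_isHomeomorph _).2 (Locale.isHomeomorph_localePointOfSpacePoint (X := X)),
    fun _ _ ↦ Iff.rfl⟩
end

section
/- Let υ be a nonempty type. The Karoubi envelope of the one-object category whose endomorphism monoid is the monoid of all functions υ → υ under composition is equivalent to the full subcategory of the category of types (sets) spanned by those types A that are nonempty and admit an injection A ↪ υ (equivalently, the nonempty retracts of υ). -/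
/-!
An idempotent `e : υ → υ` splits in the category of types through its set of fixed points, so
sending `(υ, e)` to `fixedPoints e` is a fully faithful functor out of the Karoubi envelope: a
morphism `g` satisfies `g = g ∘ e`, hence is determined by its restriction to the fixed points.
Its essential image is the class of nonempty types injecting into `υ`: fixed points of `e` are
nonempty (they contain `e x`), and an injection `i` is the splitting of the idempotent
`i ∘ invFun i`, whose fixed points form the range of `i`.
-/

open CategoryTheory CategoryTheory.Idempotents Function

universe u

lemma Function.fixedPoints_comp_invFun {α β : Type*} [Nonempty α] (f : α → β) :
    fixedPoints (f ∘ invFun f) = Set.range f := by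
  ext y
  refine ⟨fun h => ⟨_, h⟩, ?_⟩
  rintro ⟨a, rfl⟩
  exact apply_invFun_apply

namespace CategoryTheory.Idempotents.Karoubi

variable {υ : Type u}

lemma isFixedPt_p_apply (P : Karoubi (SingleObj (Function.End υ))) (x : υ) :
    IsFixedPt P.p (P.p x) :=
  congrFun P.idem x

def toFixedPoints (P : Karoubi (SingleObj (Function.End υ))) (x : υ) : fixedPoints P.p :=
  ⟨P.p x, P.isFixedPt_p_apply x⟩

lemma toFixedPoints_coe (P : Karoubi (SingleObj (Function.End υ))) (y : fixedPoints P.p) :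
    P.toFixedPoints y = y :=
  Subtype.ext y.2

section Hom

variable {P Q : Karoubi (SingleObj (Function.End υ))}

lemma Hom.f_p_apply (g : P ⟶ Q) (x : υ) : g.f (P.p x) = g.f x :=
  congrFun (p_comp g) x

lemma Hom.isFixedPt_f_apply (g : P ⟶ Q) (x : υ) : IsFixedPt Q.p (g.f x) :=
  congrFun (comp_p g) x

end Hom

variable (υ) in
def fixedPointsFunctor : Karoubi (SingleObj (Function.End υ)) ⥤ Type u where
  obj P := fixedPoints P.p
  map g := TypeCat.ofHom fun x => ⟨g.f x, g.isFixedPt_f_apply x⟩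
  map_id P := by
    ext x
    exact x.2
  map_comp f g := rfl

def fullyFaithfulFixedPointsFunctor : (fixedPointsFunctor υ).FullyFaithful where
  preimage {P Q} φ :=
    { f := fun x => (φ (P.toFixedPoints x)).1
      comm := by
        funext x
        have h : P.toFixedPoints (P.p x) = P.toFixedPoints x :=
          P.toFixedPoints_coe (P.toFixedPoints x)
        change Q.p (φ (P.toFixedPoints (P.p x))).1 = _
        rw [h]
        exact (φ _).2 }
  map_preimage {P Q} φ := by
    ext x
    exact congrArg φ (P.toFixedPoints_coe x)
  preimage_map g := hom_ext _ _ (funext g.f_p_apply)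

instance : (fixedPointsFunctor υ).Full := fullyFaithfulFixedPointsFunctor.full

instance : (fixedPointsFunctor υ).Faithful := fullyFaithfulFixedPointsFunctor.faithful

lemma essImage_fixedPointsFunctor [Nonempty υ] :
    (fixedPointsFunctor υ).essImage = fun A : Type u => Nonempty A ∧ Nonempty (A ↪ υ) := by
  ext A
  constructor
  · rintro ⟨P, ⟨e⟩⟩
    exact ⟨⟨e.hom (P.toFixedPoints (Classical.arbitrary υ))⟩,
      ⟨e.toEquiv.symm.toEmbedding.trans (Embedding.subtype _)⟩⟩
  · rintro ⟨_, ⟨i⟩⟩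
    let P : Karoubi (SingleObj (Function.End υ)) :=
      ⟨SingleObj.star _, i ∘ invFun i, funext fun _ => apply_invFun_apply⟩
    exact ⟨P, ⟨((Equiv.setCongr (fixedPoints_comp_invFun i)).trans
      (Equiv.ofInjective i i.injective).symm).toIso⟩⟩

end CategoryTheory.Idempotents.Karoubi

/-- For a nonempty type `υ`, the Karoubi envelope of the one-object category on the monoid
`Function.End υ` of all functions `υ → υ` is equivalent to the full subcategory of the
category of types spanned by the nonempty types admitting an injection into `υ`
(equivalently, the nonempty retracts of `υ`). -/
theorem karoubi_singleObj_end_equiv_retracts (υ : Type u) [Nonempty υ] :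
    Nonempty (Karoubi (SingleObj (Function.End υ)) ≌
      ObjectProperty.FullSubcategory (fun A : Type u => Nonempty A ∧ Nonempty (A ↪ υ))) := by
  rw [← Karoubi.essImage_fixedPointsFunctor]
  exact ⟨(Karoubi.fixedPointsFunctor υ).toEssImage.asEquivalence⟩
end
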